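/- Let q = p^d with p prime and d ≥ 1, and let C be a code in the Hamming graph H(m,q) with minimum distance δ ≥ 5 containing the zero vertex 0. Suppose X ≤ Aut(C) is such that C is X-alphabet-affine and (X,2)-neighbour-transitive. Let N be a normal p-subgroup of K = X ∩ B containing every normal p-subgroup of K, and let W be the orbit of 0 under N. If W is not the binary repetition code (in particular, whenever q > 2 or W ≠ {0, all-ones vector}), then q² divides |W|. -/

import Mathlib

open Equiv

namespace Paper

/-- A Hamming-graph automorphism of `Fin m → Q` given by entrywise permutations `h`
and a permutation `σ` of the entries. -/
def IsQAutPair {m : ℕ} {Q : Type*} (g : Perm (Fin m → Q)) (h : Fin m → Perm Q)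
    (σ : Perm (Fin m)) : Prop :=
  ∀ α i, g α i = h i (α (σ.symm i))

/-- `g` is an automorphism of the Hamming graph `H(m,q)`. -/
def IsQAut {m : ℕ} {Q : Type*} (g : Perm (Fin m → Q)) : Prop :=
  ∃ h σ, IsQAutPair g h σ

/-- The permutation group `X_i^{Q_i}` induced on the alphabet in entry `i`
by the stabiliser in `X` of the entry `i`. -/
def indQ {m : ℕ} {Q : Type*} (X : Set (Perm (Fin m → Q))) (i : Fin m) : Set (Perm Q) :=
  {π | ∃ g ∈ X, ∃ h σ, IsQAutPair g h σ ∧ σ i = i ∧ h i = π}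

/-- `C_s`, the set of vertices at Hamming distance exactly `s` from the code `C`. -/
def distSet {m : ℕ} {Q : Type*} [DecidableEq Q] (C : Set (Fin m → Q)) (s : ℕ) :
    Set (Fin m → Q) :=
  {v | (∃ c ∈ C, hammingDist v c = s) ∧ ∀ c ∈ C, s ≤ hammingDist v c}

/-- `C` is `(X,s)`-neighbour-transitive: `X` acts transitively on each of
`C = C_0, C_1, …, C_s`. -/
def NbrTrans {m : ℕ} {Q : Type*} [DecidableEq Q] (X : Set (Perm (Fin m → Q)))
    (C : Set (Fin m → Q)) (s : ℕ) : Prop :=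
  ∀ j ≤ s, ∀ u ∈ distSet C j, ∀ v ∈ distSet C j, ∃ g ∈ X, g u = v

/-- `δ` is the minimum distance of the code `C`. -/
def IsMinDist {m : ℕ} {Q : Type*} [DecidableEq Q] (C : Set (Fin m → Q)) (δ : ℕ) : Prop :=
  (∃ u ∈ C, ∃ v ∈ C, u ≠ v ∧ hammingDist u v = δ) ∧
  ∀ u ∈ C, ∀ v ∈ C, u ≠ v → δ ≤ hammingDist u v

/-- The alphabet `Q = F_p^d`. -/
abbrev QA (p d : ℕ) : Type := Fin d → ZMod p

/-- The vertex set `V = (F_p^d)^M` of `H(m, p^d)`. -/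
abbrev VA (p d m : ℕ) : Type := Fin m → QA p d

/-- The subgroup of `Sym(A)` consisting of all translations `v ↦ v + a`. -/
def TransSub (A : Type*) [AddCommGroup A] : Subgroup (Perm A) where
  carrier := {g : Perm A | ∃ a : A, ∀ v, g v = v + a}
  one_mem' := ⟨0, fun v => by simp⟩
  mul_mem' := fun {f g} hf hg => by
    obtain ⟨a, ha⟩ := hf
    obtain ⟨b, hb⟩ := hg
    exact ⟨b + a, fun v => by rw [Perm.mul_apply, hb, ha, add_assoc]⟩
  inv_mem' := fun {f} hf => by
    obtain ⟨a, ha⟩ := hf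
    refine ⟨-a, fun v => ?_⟩
    have h1 : f (v + -a) = v := by rw [ha]; abel
    calc f⁻¹ v = f⁻¹ (f (v + -a)) := by rw [h1]
      _ = v + -a := by first | simp | exact f.symm_apply_apply _

/-- `K = X ∩ B`, the kernel of the action of `X` on the set of entries `M`:
the elements of `X` acting entrywise (with trivial permutation of `M`). -/
def KSet {p d m : ℕ} (X : Set (Perm (VA p d m))) : Set (Perm (VA p d m)) :=
  {g | g ∈ X ∧ ∃ h, IsQAutPair g h 1}

/-- The group `K^{Q_i}` induced on the alphabet in entry `i` by `K = X ∩ B`. -/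
def indK {p d m : ℕ} (X : Set (Perm (VA p d m))) (i : Fin m) : Set (Perm (QA p d)) :=
  {π | ∃ g ∈ X, ∃ h, IsQAutPair g h 1 ∧ h i = π}

/-- `C` is `X`-alphabet-affine: `X ≤ Aut(C)`, `K ≠ 1`, `X` is transitive on the entries,
and each `X_i^{Q_i}` is an affine 2-transitive group, i.e. it is 2-transitive on `Q_i`
and contains the translation group `T_i` as a normal subgroup. -/
def AlphabetAffine {p d m : ℕ} (X : Set (Perm (VA p d m))) (C : Set (VA p d m)) : Prop :=
  (∀ g ∈ X, IsQAut g) ∧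
  (∀ g ∈ X, g '' C = C) ∧
  (∃ g ∈ KSet X, g ≠ 1) ∧
  (∀ i j : Fin m, ∃ g ∈ X, ∃ h σ, IsQAutPair g h σ ∧ σ i = j) ∧
  (∀ i : Fin m,
    (∀ a b a' b' : QA p d, a ≠ b → a' ≠ b' → ∃ π ∈ indQ X i, π a = a' ∧ π b = b') ∧
    ((TransSub (QA p d) : Set (Perm (QA p d))) ⊆ indQ X i) ∧
    (∀ π ∈ indQ X i, ∀ t ∈ TransSub (QA p d), π * t * π⁻¹ ∈ TransSub (QA p d)))

/-!
Every element of `N` is a translation of `V`. Indeed, in each entry `i` the group induced by `N`,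
joined with the translations `T_i`, is a `p`-group normalised by the 2-transitive group
`X_i^{Q_i}`; its stabiliser of `0` fixes some nonzero point (count fixed points mod `p`), hence,
being normalised by a group transitive on `Q \ {0}`, fixes every point. So that join is `T_i`, and
`W = 0^N` is an additive subgroup. It is nonzero: commutators inside `K` produce a nontrivial
translation in `K`, and the translations in `K` form a normal `p`-subgroup, hence lie in `N`.

As `δ ≥ 5`, every weight-2 vertex lies in `C_2` with `0` as its unique nearest codeword, so
`(X,2)`-neighbour-transitivity carries two nonzero entries of a codeword of `W` to any two entries
with any nonzero values, by an element fixing `0` and normalising `N`. For `q > 2` sums of two such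
codewords, and for `q = 2` a codeword other than `0` and the all-ones vector, show that `W` maps
onto `Q²` under restriction to two entries; hence `q²` divides `|W|`.
-/

open scoped commutatorElement

namespace IsQAutPair

variable {m : ℕ} {Q : Type*} {g g₁ g₂ : Perm (Fin m → Q)} {h h₁ h₂ : Fin m → Perm Q}
  {σ σ₁ σ₂ : Perm (Fin m)}

theorem one : IsQAutPair (1 : Perm (Fin m → Q)) (fun _ => 1) 1 := fun _ _ => rfl

theorem mul (H₁ : IsQAutPair g₁ h₁ σ₁) (H₂ : IsQAutPair g₂ h₂ σ₂) :
    IsQAutPair (g₁ * g₂) (fun i => h₁ i * h₂ (σ₁.symm i)) (σ₁ * σ₂) := by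
  intro α i
  rw [Perm.mul_apply, H₁, H₂]
  rfl

theorem inv (H : IsQAutPair g h σ) : IsQAutPair g⁻¹ (fun i => (h (σ i))⁻¹) σ⁻¹ := by
  intro α i
  have key := H (g⁻¹ α) (σ i)
  simp only [Perm.coe_inv, apply_symm_apply, symm_apply_apply] at key
  show g⁻¹ α i = (h (σ i))⁻¹ (α (σ i))
  simp [key]

theorem apply_const (H : IsQAutPair g h σ) (i : Fin m) (x : Q) : h i x = g (fun _ => x) i :=
  (H (fun _ => x) i).symm

theorem base_mul (H₁ : IsQAutPair g₁ h₁ 1) (H₂ : IsQAutPair g₂ h₂ 1) :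
    IsQAutPair (g₁ * g₂) (fun i => h₁ i * h₂ i) 1 := by
  intro α i
  rw [Perm.mul_apply, H₁, H₂]
  rfl

theorem base_inv (H : IsQAutPair g h 1) : IsQAutPair g⁻¹ (fun i => (h i)⁻¹) 1 := by
  simpa using H.inv

theorem base_pow (H : IsQAutPair g h 1) (n : ℕ) : IsQAutPair (g ^ n) (fun i => h i ^ n) 1 := by
  induction n with
  | zero => exact one
  | succ n ih => simpa [pow_succ] using ih.base_mul H

theorem base_commutatorElement (H₁ : IsQAutPair g₁ h₁ 1) (H₂ : IsQAutPair g₂ h₂ 1) :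
    IsQAutPair ⁅g₁, g₂⁆ (fun i => ⁅h₁ i, h₂ i⁆) 1 :=
  ((H₁.base_mul H₂).base_mul H₁.base_inv).base_mul H₂.base_inv

theorem conj {x : Perm (Fin m → Q)} (Hx : IsQAutPair x h σ) (Hg : IsQAutPair g h₁ 1) :
    IsQAutPair (x * g * x⁻¹) (fun i => h i * h₁ (σ.symm i) * (h i)⁻¹) 1 := by
  simpa [mul_assoc] using (Hx.mul Hg).mul Hx.inv

theorem hammingDist_apply [DecidableEq Q] (H : IsQAutPair g h σ) (α β : Fin m → Q) :
    hammingDist (g α) (g β) = hammingDist α β :=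
  Finset.card_equiv σ.symm fun i => by simp [H _ i]

theorem apply_eq_apply_of_ne_zero [Zero Q] (H : IsQAutPair g h σ) (hg0 : g 0 = 0)
    {v w : Fin m → Q} (hvw : ∀ s, v s ≠ 0 → w s = v s) {t : Fin m} (ht : g v t ≠ 0) :
    g w t = g v t := by
  rw [H] at ht ⊢
  rw [H, hvw]
  intro hv
  rw [hv] at ht
  exact ht (by simpa [hg0] using (H 0 t).symm)

end IsQAutPair

section Translations

variable {A : Type*} [AddCommGroup A]

theorem addRight_mem_transSub (a : A) : Equiv.addRight a ∈ TransSub A := ⟨a, fun _ => rfl⟩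

theorem apply_eq_add_apply_zero {t : Perm A} (ht : t ∈ TransSub A) (v : A) : t v = v + t 0 := by
  obtain ⟨a, ha⟩ := ht
  rw [ha, ha, zero_add]

theorem eq_of_mem_transSub {s t : Perm A} (hs : s ∈ TransSub A) (ht : t ∈ TransSub A)
    (h0 : s 0 = t 0) : s = t :=
  Equiv.ext fun v => by rw [apply_eq_add_apply_zero hs, apply_eq_add_apply_zero ht, h0]

theorem pow_apply_of_mem_transSub {t : Perm A} (ht : t ∈ TransSub A) (n : ℕ) (v : A) :
    (t ^ n) v = v + n • t 0 := by
  induction n generalizing v with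
  | zero => simp
  | succ n ih =>
    rw [pow_succ, Perm.mul_apply, ih, apply_eq_add_apply_zero ht, succ_nsmul]
    abel

theorem isPGroup_transSub {p : ℕ} (hA : ∀ a : A, p • a = 0) : IsPGroup p (TransSub A) := by
  intro t
  refine ⟨1, Subtype.ext (Equiv.ext fun v => ?_)⟩
  rw [Subgroup.coe_pow, pow_one, pow_apply_of_mem_transSub t.2, hA, add_zero]
  rfl

theorem mem_transSub_of_commute {u : Perm A} (hu : ∀ t ∈ TransSub A, Commute u t) :
    u ∈ TransSub A := by
  refine ⟨u 0, fun v => ?_⟩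
  have := congrArg (· 0) (hu _ (addRight_mem_transSub v)).eq
  simp only [Perm.mul_apply, coe_addRight, zero_add] at this
  rw [this, add_comm]

theorem mem_normalizer_transSub {u : Perm A}
    (hu : ∀ t ∈ TransSub A, u * t * u⁻¹ ∈ TransSub A)
    (hu' : ∀ t ∈ TransSub A, u⁻¹ * t * u⁻¹⁻¹ ∈ TransSub A) :
    u ∈ Subgroup.normalizer (TransSub A : Set (Perm A)) :=
  Subgroup.mem_normalizer_iff.mpr fun t =>
    ⟨hu t, fun ht => by simpa [mul_assoc] using hu' _ ht⟩

theorem mem_transSub_pi_iff {m : ℕ} {g : Perm (Fin m → A)} {h : Fin m → Perm A}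
    (H : IsQAutPair g h 1) : g ∈ TransSub (Fin m → A) ↔ ∀ i, h i ∈ TransSub A := by
  constructor
  · intro hg i
    exact ⟨g 0 i, fun x => by rw [H.apply_const, apply_eq_add_apply_zero hg]; rfl⟩
  · intro hh
    exact ⟨fun i => h i 0, fun α => funext fun i => by
      rw [H, apply_eq_add_apply_zero (hh i)]; rfl⟩

variable [Finite A] {p : ℕ} [Fact p.Prime]

theorem exists_ne_zero_forall_apply_eq (hA : p ∣ Nat.card A) {S : Subgroup (Perm A)}
    (hS : IsPGroup p S) (hS0 : ∀ s ∈ S, s 0 = 0) : ∃ v : A, v ≠ 0 ∧ ∀ s ∈ S, s v = v := by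
  by_contra! hmoved
  have hfix : MulAction.fixedPoints S A = {0} := by
    ext v
    refine ⟨fun hv => ?_, fun hv => fun s => by rw [hv]; exact hS0 s s.2⟩
    by_contra hv0
    obtain ⟨s, hs, hsv⟩ := hmoved v hv0
    exact hsv (hv ⟨s, hs⟩)
  have hcard : Nat.card (MulAction.fixedPoints S A) = 1 := by rw [hfix]; exact Nat.card_unique
  have hmod := hS.card_modEq_card_fixedPoints A
  rw [hcard] at hmod
  have hp1 : p ∣ 1 :=
    (Nat.modEq_iff_dvd' zero_le_one).mp ((Nat.modEq_zero_iff_dvd.mpr hA).symm.trans hmod)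
  exact (Fact.out : p.Prime).one_lt.ne' (Nat.dvd_one.mp hp1)

theorem eq_one_of_isPGroup_of_apply_zero (hA : p ∣ Nat.card A) {G : Set (Perm A)}
    (hG : ∀ a b : A, a ≠ 0 → b ≠ 0 → ∃ π ∈ G, π 0 = 0 ∧ π a = b)
    {R : Subgroup (Perm A)} (hR : IsPGroup p R) (hGR : ∀ π ∈ G, ∀ ρ ∈ R, π * ρ * π⁻¹ ∈ R)
    {ρ : Perm A} (hρ : ρ ∈ R) (hρ0 : ρ 0 = 0) : ρ = 1 := by
  obtain ⟨v, hv0, hv⟩ := exists_ne_zero_forall_apply_eq hA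
    (hR.to_le (inf_le_left : R ⊓ MulAction.stabilizer (Perm A) (0 : A) ≤ R))
    fun s hs => (Subgroup.mem_inf.mp hs).2
  by_contra hρ1
  obtain ⟨a, ha⟩ : ∃ a, ρ a ≠ a := not_forall.mp fun h => hρ1 (Equiv.ext h)
  have ha0 : a ≠ 0 := by rintro rfl; exact ha hρ0
  obtain ⟨π, hπ, hπ0, hπa⟩ := hG a v ha0 hv0
  have hπ0' : π⁻¹ 0 = 0 := Perm.inv_eq_iff_eq.mpr hπ0.symm
  have hπa' : π⁻¹ v = a := Perm.inv_eq_iff_eq.mpr hπa.symm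
  have := hv (π * ρ * π⁻¹) (Subgroup.mem_inf.mpr ⟨hGR π hπ ρ hρ, by
    rw [MulAction.mem_stabilizer_iff, Perm.smul_def, Perm.mul_apply, Perm.mul_apply, hπ0', hρ0,
      hπ0]⟩)
  rw [Perm.mul_apply, Perm.mul_apply, hπa', ← hπa] at this
  exact ha (π.injective this)

theorem le_transSub_of_isPGroup (hT : IsPGroup p (TransSub A)) (hA : p ∣ Nat.card A)
    {G : Set (Perm A)} (hG : ∀ a b : A, a ≠ 0 → b ≠ 0 → ∃ π ∈ G, π 0 = 0 ∧ π a = b)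
    (hGT : ∀ π ∈ G, ∀ t ∈ TransSub A, π * t * π⁻¹ ∈ TransSub A)
    {P : Subgroup (Perm A)} (hP : IsPGroup p P)
    (hPT : ∀ u ∈ P, ∀ t ∈ TransSub A, u * t * u⁻¹ ∈ TransSub A)
    (hGP : ∀ π ∈ G, ∀ u ∈ P, π * u * π⁻¹ ∈ P) : P ≤ TransSub A := by
  have hR : IsPGroup p (P ⊔ TransSub A : Subgroup (Perm A)) :=
    hP.to_sup_of_normal_right' hT fun u hu =>
      mem_normalizer_transSub (hPT u hu) (hPT _ (P.inv_mem hu))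
  have hGR : ∀ π ∈ G, ∀ ρ ∈ P ⊔ TransSub A, π * ρ * π⁻¹ ∈ P ⊔ TransSub A := by
    intro π hπ
    suffices P ⊔ TransSub A ≤ (P ⊔ TransSub A).comap (MulAut.conj π).toMonoidHom from
      fun ρ hρ => this hρ
    exact sup_le (fun u hu => Subgroup.mem_sup_left (hGP π hπ u hu))
      (fun t ht => Subgroup.mem_sup_right (hGT π hπ t ht))
  intro u hu
  have hmem : (Equiv.addRight (u 0))⁻¹ * u ∈ P ⊔ TransSub A :=
    mul_mem (Subgroup.mem_sup_right (inv_mem (addRight_mem_transSub _)))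
      (Subgroup.mem_sup_left hu)
  have h1 := eq_one_of_isPGroup_of_apply_zero hA hG hR hGR hmem (by simp)
  rw [inv_mul_eq_one] at h1
  exact h1 ▸ addRight_mem_transSub _

end Translations

theorem commutatorElement_mem_of_mem_right {G : Type*} [Group G] {H : Subgroup G} {a b : G}
    (hb : b ∈ H) (hab : a * b * a⁻¹ ∈ H) : ⁅a, b⁆ ∈ H :=
  H.mul_mem hab (H.inv_mem hb)

theorem commutatorElement_mem_of_mem_left {G : Type*} [Group G] {H : Subgroup G} {a b : G}
    (ha : a ∈ H) (hba : b * a⁻¹ * b⁻¹ ∈ H) : ⁅a, b⁆ ∈ H := by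
  rw [commutatorElement_def, mul_assoc, mul_assoc]
  exact H.mul_mem ha (by simpa [mul_assoc] using hba)

/-- `N = O_p(K)`. -/
structure IsPCore {G : Type*} [Group G] (p : ℕ) (K : Set G) (N : Subgroup G) : Prop where
  subset : (N : Set G) ⊆ K
  isPGroup : IsPGroup p N
  conj_mem : ∀ g ∈ K, ∀ t ∈ N, g * t * g⁻¹ ∈ N
  le_of_normal : ∀ P : Subgroup G, (P : Set G) ⊆ K → IsPGroup p P →
    (∀ g ∈ K, ∀ t ∈ P, g * t * g⁻¹ ∈ P) → P ≤ N

theorem IsPCore.conj_mem_of_normalizes {G : Type*} [Group G] {p : ℕ} {K : Set G}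
    {N : Subgroup G} (hN : IsPCore p K N) {x : G} (hx : ∀ g ∈ K, x * g * x⁻¹ ∈ K)
    (hx' : ∀ g ∈ K, x⁻¹ * g * x ∈ K) {n : G} (hn : n ∈ N) : x * n * x⁻¹ ∈ N := by
  refine hN.le_of_normal (N.map (MulAut.conj x).toMonoidHom) ?_ (hN.isPGroup.map _) ?_ ⟨n, hn, rfl⟩
  · rintro _ ⟨n', hn', rfl⟩
    exact hx n' (hN.subset hn')
  · rintro g hg _ ⟨n', hn', rfl⟩
    refine ⟨_, hN.conj_mem _ (hx' g hg) n' hn', ?_⟩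
    simp [mul_assoc]

section Kernel

variable {p d m : ℕ}

def kerSubgroup (X : Subgroup (Perm (VA p d m))) : Subgroup (Perm (VA p d m)) where
  carrier := KSet (X : Set (Perm (VA p d m)))
  one_mem' := ⟨X.one_mem, _, IsQAutPair.one⟩
  mul_mem' := fun ⟨hg, _, H⟩ ⟨hg', _, H'⟩ => ⟨X.mul_mem hg hg', _, H.base_mul H'⟩
  inv_mem' := fun ⟨hg, _, H⟩ => ⟨X.inv_mem hg, _, H.base_inv⟩

def indKSubgroup (S : Subgroup (Perm (VA p d m))) (i : Fin m) : Subgroup (Perm (QA p d)) where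
  carrier := indK (S : Set (Perm (VA p d m))) i
  one_mem' := ⟨1, S.one_mem, _, IsQAutPair.one, rfl⟩
  mul_mem' := by
    rintro _ _ ⟨g, hg, k, Hk, rfl⟩ ⟨g', hg', k', Hk', rfl⟩
    exact ⟨g * g', S.mul_mem hg hg', _, Hk.base_mul Hk', rfl⟩
  inv_mem' := by
    rintro _ ⟨g, hg, k, Hk, rfl⟩
    exact ⟨g⁻¹, S.inv_mem hg, _, Hk.base_inv, rfl⟩

theorem isPGroup_indKSubgroup {S : Subgroup (Perm (VA p d m))} (hS : IsPGroup p S) (i : Fin m) :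
    IsPGroup p (indKSubgroup S i) := by
  rintro ⟨_, g, hg, k, Hk, rfl⟩
  obtain ⟨e, he⟩ := hS ⟨g, hg⟩
  have hge : g ^ p ^ e = 1 := congrArg Subtype.val he
  refine ⟨e, Subtype.ext (Equiv.ext fun x => ?_)⟩
  simp [(Hk.base_pow _).apply_const, hge]

theorem indK_subset_indQ {S S' : Set (Perm (VA p d m))} (hS : S ⊆ S') (i : Fin m) :
    indK S i ⊆ indQ S' i := by
  rintro _ ⟨g, hg, k, Hk, rfl⟩
  exact ⟨g, hS hg, k, 1, Hk, rfl, rfl⟩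

theorem conj_mem_indK {X S : Set (Perm (VA p d m))} (hXS : ∀ x ∈ X, ∀ g ∈ S, x * g * x⁻¹ ∈ S)
    {i : Fin m} {π ρ : Perm (QA p d)} (hπ : π ∈ indQ X i) (hρ : ρ ∈ indK S i) :
    π * ρ * π⁻¹ ∈ indK S i := by
  obtain ⟨x, hx, h, σ, Hx, hσ, rfl⟩ := hπ
  obtain ⟨g, hg, k, Hk, rfl⟩ := hρ
  refine ⟨_, hXS x hx g hg, _, Hx.conj Hk, ?_⟩
  simp [σ.symm_apply_eq.mpr hσ.symm]

theorem conj_mem_kset {X : Subgroup (Perm (VA p d m))}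
    (hX : ∀ g ∈ (X : Set (Perm (VA p d m))), IsQAut g) {x g : Perm (VA p d m)} (hx : x ∈ X)
    (hg : g ∈ KSet (X : Set (Perm (VA p d m)))) : x * g * x⁻¹ ∈ KSet (X : Set (Perm (VA p d m))) :=
  have ⟨hgX, _, Hg⟩ := hg
  have ⟨_, _, Hx⟩ := hX x hx
  ⟨X.mul_mem (X.mul_mem hx hgX) (X.inv_mem hx), _, Hx.conj Hg⟩

end Kernel

section AlphabetAffine

variable {p d m : ℕ} {C : Set (VA p d m)} {X : Subgroup (Perm (VA p d m))}

theorem exists_ne_one_mem_indK (hAff : AlphabetAffine (X : Set (Perm (VA p d m))) C)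
    (i : Fin m) : ∃ ρ ∈ indK (X : Set (Perm (VA p d m))) i, ρ ≠ 1 := by
  obtain ⟨-, -, ⟨g, ⟨hgX, k, Hk⟩, hg1⟩, hXM, -⟩ := hAff
  obtain ⟨j, hj⟩ : ∃ j, k j ≠ 1 := by
    by_contra! hk
    exact hg1 (Equiv.ext fun α => funext fun j => by rw [Hk, hk]; rfl)
  obtain ⟨x, hx, h, σ, Hx, rfl⟩ := hXM j i
  refine ⟨h (σ j) * k j * (h (σ j))⁻¹,
    ⟨_, X.mul_mem (X.mul_mem hx hgX) (X.inv_mem hx), _, Hx.conj Hk, by simp⟩, ?_⟩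
  rwa [Ne, conj_eq_one_iff]

theorem exists_ne_one_mem_indK_transSub (hAff : AlphabetAffine (X : Set (Perm (VA p d m))) C)
    (i : Fin m) :
    ∃ τ ∈ indK (X : Set (Perm (VA p d m))) i, τ ∈ TransSub (QA p d) ∧ τ ≠ 1 := by
  obtain ⟨ρ, hρ, hρ1⟩ := exists_ne_one_mem_indK hAff i
  by_cases hρT : ρ ∈ TransSub (QA p d)
  · exact ⟨ρ, hρ, hρT, hρ1⟩
  obtain ⟨t, ht, hρt⟩ : ∃ t ∈ TransSub (QA p d), ¬Commute ρ t := by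
    by_contra! h
    exact hρT (mem_transSub_of_commute h)
  have hXi := hAff.2.2.2.2 i
  refine ⟨⁅ρ, t⁆, ?_, ?_, mt commutatorElement_eq_one_iff_commute.mp hρt⟩
  · exact commutatorElement_mem_of_mem_left (H := indKSubgroup X i) hρ
      (conj_mem_indK (fun x hx g hg => X.mul_mem (X.mul_mem hx hg) (X.inv_mem hx))
        (hXi.2.1 ht) ((indKSubgroup X i).inv_mem hρ))
  · exact commutatorElement_mem_of_mem_right ht
      (hXi.2.2 ρ (indK_subset_indQ subset_rfl i hρ) t ht)

theorem transSub_subset_indK (hAff : AlphabetAffine (X : Set (Perm (VA p d m))) C) (i : Fin m) :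
    (TransSub (QA p d) : Set (Perm (QA p d))) ⊆ indK (X : Set (Perm (VA p d m))) i := by
  intro t ht
  by_cases ht0 : t 0 = 0
  · rw [eq_of_mem_transSub ht (TransSub (QA p d)).one_mem ht0]
    exact (indKSubgroup X i).one_mem
  obtain ⟨τ, hτ, hτT, hτ1⟩ := exists_ne_one_mem_indK_transSub hAff i
  have hτ0 : τ 0 ≠ 0 := fun h => hτ1 (eq_of_mem_transSub hτT (TransSub (QA p d)).one_mem h)
  have hXi := hAff.2.2.2.2 i
  obtain ⟨π, hπ, hπ0, hπτ⟩ := hXi.1 0 (τ 0) 0 (t 0) (Ne.symm hτ0) (Ne.symm ht0)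
  have hπt : π * τ * π⁻¹ = t := eq_of_mem_transSub (hXi.2.2 π hπ τ hτT) ht <| by
    rw [Perm.mul_apply, Perm.mul_apply, Perm.inv_eq_iff_eq.mpr hπ0.symm, hπτ]
  exact hπt ▸ conj_mem_indK (fun x hx g hg => X.mul_mem (X.mul_mem hx hg) (X.inv_mem hx)) hπ hτ

theorem exists_ne_one_mem_kset_transSub (hAff : AlphabetAffine (X : Set (Perm (VA p d m))) C) :
    ∃ g ∈ KSet (X : Set (Perm (VA p d m))), g ∈ TransSub (VA p d m) ∧ g ≠ 1 := by
  obtain ⟨g, hgK, hg1⟩ := hAff.2.2.1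
  obtain ⟨h, Hg⟩ := hgK.2
  -- Induction on a set `s` of entries outside which all components are translations. For `i ∈ s`
  -- with `h i ∉ T_i`, the commutator with some `y ∈ K` whose `i`-th component is a translation not
  -- commuting with `h i` is nontrivial and has translation components outside `s \ {i}`.
  suffices key : ∀ s : Finset (Fin m), ∀ g h, g ∈ KSet (X : Set (Perm (VA p d m))) →
      IsQAutPair g h 1 → g ≠ 1 → (∀ i ∉ s, h i ∈ TransSub (QA p d)) →
      ∃ g ∈ KSet (X : Set (Perm (VA p d m))), g ∈ TransSub (VA p d m) ∧ g ≠ 1 from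
    key Finset.univ g h hgK Hg hg1 (by simp)
  intro s
  induction s using Finset.induction_on with
  | empty =>
    exact fun g h hgK Hg hg1 hT =>
      ⟨g, hgK, (mem_transSub_pi_iff Hg).mpr fun i => hT i (Finset.notMem_empty i), hg1⟩
  | insert i s _ ih =>
    intro g h hgK Hg hg1 hT
    have hnorm : ∀ {j g k}, g ∈ X → IsQAutPair g k 1 →
        ∀ t ∈ TransSub (QA p d), k j * t * (k j)⁻¹ ∈ TransSub (QA p d) :=
      fun hg Hk => (hAff.2.2.2.2 _).2.2 _ (indK_subset_indQ subset_rfl _ ⟨_, hg, _, Hk, rfl⟩)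
    by_cases hiT : h i ∈ TransSub (QA p d)
    · refine ih g h hgK Hg hg1 fun j hj => ?_
      by_cases hji : j = i
      · exact hji ▸ hiT
      · exact hT j (by simp [hji, hj])
    obtain ⟨t, ht, hit⟩ : ∃ t ∈ TransSub (QA p d), ¬Commute (h i) t := by
      by_contra! hc
      exact hiT (mem_transSub_of_commute hc)
    obtain ⟨y, hyX, k, Hk, rfl⟩ := transSub_subset_indK hAff i ht
    have Hc := Hg.base_commutatorElement Hk
    refine ih ⁅g, y⁆ _ ?_ Hc ?_ fun j hj => ?_
    · exact commutatorElement_mem_of_mem_left (H := kerSubgroup X) hgK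
        ((kerSubgroup X).mul_mem ((kerSubgroup X).mul_mem ⟨hyX, k, Hk⟩
          ((kerSubgroup X).inv_mem hgK)) ((kerSubgroup X).inv_mem ⟨hyX, k, Hk⟩))
    · intro hc1
      apply hit
      rw [← commutatorElement_eq_one_iff_commute]
      refine Equiv.ext fun x => ?_
      rw [Hc.apply_const, hc1]
      rfl
    · by_cases hji : j = i
      · subst hji
        exact commutatorElement_mem_of_mem_right ht (hnorm hgK.1 Hg _ ht)
      · have hjT := hT j (by simp [hji, hj])
        exact commutatorElement_mem_of_mem_left hjT (hnorm hyX Hk _ ((TransSub _).inv_mem hjT))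

end AlphabetAffine

section PCore

variable {p d m : ℕ} {C : Set (VA p d m)} {X N : Subgroup (Perm (VA p d m))}

theorem IsPCore.conj_mem_of_mem (hX : ∀ g ∈ (X : Set (Perm (VA p d m))), IsQAut g)
    (hN : IsPCore p (KSet (X : Set (Perm (VA p d m)))) N) {x n : Perm (VA p d m)} (hx : x ∈ X)
    (hn : n ∈ N) : x * n * x⁻¹ ∈ N :=
  hN.conj_mem_of_normalizes (fun _ hg => conj_mem_kset hX hx hg)
    (fun g hg => by simpa using conj_mem_kset hX (X.inv_mem hx) hg) hn

theorem indK_subset_transSub [Fact p.Prime] (hd : 1 ≤ d)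
    (hAff : AlphabetAffine (X : Set (Perm (VA p d m))) C)
    (hN : IsPCore p (KSet (X : Set (Perm (VA p d m)))) N) (i : Fin m) :
    indK (N : Set (Perm (VA p d m))) i ⊆ TransSub (QA p d) := by
  have hXi := hAff.2.2.2.2 i
  refine le_transSub_of_isPGroup (isPGroup_transSub (ZModModule.char_nsmul_eq_zero p))
    (by simpa using dvd_pow_self p (by omega : d ≠ 0)) (G := indQ (X : Set (Perm (VA p d m))) i)
    (fun a b ha hb => hXi.1 0 a 0 b (Ne.symm ha) (Ne.symm hb)) hXi.2.2
    (isPGroup_indKSubgroup hN.isPGroup i) (fun u hu => hXi.2.2 u ?_)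
    (fun π hπ u hu => conj_mem_indK (fun x hx n hn => hN.conj_mem_of_mem hAff.1 hx hn) hπ hu)
  exact indK_subset_indQ (fun g hg => (hN.subset hg).1) i hu

theorem le_transSub_of_isPCore [Fact p.Prime] (hd : 1 ≤ d)
    (hAff : AlphabetAffine (X : Set (Perm (VA p d m))) C)
    (hN : IsPCore p (KSet (X : Set (Perm (VA p d m)))) N) : N ≤ TransSub (VA p d m) :=
  fun g hg =>
    have ⟨_, h, H⟩ := hN.subset hg
    (mem_transSub_pi_iff H).mpr fun i => indK_subset_transSub hd hAff hN i ⟨g, hg, h, H, rfl⟩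

theorem exists_ne_one_mem_of_isPCore (hAff : AlphabetAffine (X : Set (Perm (VA p d m))) C)
    (hN : IsPCore p (KSet (X : Set (Perm (VA p d m)))) N) : ∃ g ∈ N, g ≠ 1 := by
  obtain ⟨g, hgK, hgT, hg1⟩ := exists_ne_one_mem_kset_transSub hAff
  refine ⟨g, hN.le_of_normal (kerSubgroup X ⊓ TransSub (VA p d m)) (fun _ hg => hg.1)
    ((isPGroup_transSub (ZModModule.char_nsmul_eq_zero p)).to_le inf_le_right) ?_ ⟨hgK, hgT⟩, hg1⟩
  rintro g hg t ⟨htK, htT⟩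
  refine ⟨(kerSubgroup X).mul_mem ((kerSubgroup X).mul_mem hg htK) ((kerSubgroup X).inv_mem hg), ?_⟩
  obtain ⟨hgX, k, Hk⟩ := hg
  obtain ⟨-, l, Hl⟩ := htK
  refine (mem_transSub_pi_iff ((Hk.base_mul Hl).base_mul Hk.base_inv)).mpr fun i => ?_
  exact (hAff.2.2.2.2 i).2.2 _ (indK_subset_indQ subset_rfl i ⟨g, hgX, k, Hk, rfl⟩) _
    ((mem_transSub_pi_iff Hl).mp htT i)

end PCore

section Code

variable {m : ℕ} {Q : Type*}

theorem eq_of_hammingDist_le [DecidableEq Q] {C : Set (Fin m → Q)} {s : ℕ}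
    (hδ : ∀ u ∈ C, ∀ v ∈ C, u ≠ v → 2 * s < hammingDist u v) {v c c' : Fin m → Q}
    (hc : c ∈ C) (hc' : c' ∈ C) (h : hammingDist v c ≤ s) (h' : hammingDist v c' ≤ s) :
    c = c' := by
  by_contra hne
  have := hδ c hc c' hc' hne
  have := hammingDist_triangle c v c'
  rw [hammingDist_comm c v] at this
  omega

theorem mem_distSet_of_hammingDist_eq [DecidableEq Q] {C : Set (Fin m → Q)} {s : ℕ}
    (hδ : ∀ u ∈ C, ∀ v ∈ C, u ≠ v → 2 * s < hammingDist u v) {v c : Fin m → Q} (hc : c ∈ C)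
    (hv : hammingDist v c = s) : v ∈ distSet C s := by
  refine ⟨⟨c, hc, hv⟩, fun c' hc' => ?_⟩
  by_contra! hlt
  obtain rfl := eq_of_hammingDist_le hδ hc hc' hv.le hlt.le
  omega

variable [Zero Q]

theorem exists_ne_of_one_lt_hammingNorm [DecidableEq Q] {w : Fin m → Q} (hw : 1 < hammingNorm w) :
    ∃ i j, i ≠ j ∧ w i ≠ 0 ∧ w j ≠ 0 := by
  obtain ⟨i, hi, j, hj, hij⟩ := Finset.one_lt_card.mp hw
  exact ⟨i, j, hij, (Finset.mem_filter.mp hi).2, (Finset.mem_filter.mp hj).2⟩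

def pairVec (i j : Fin m) (a b : Q) : Fin m → Q :=
  fun t => if t = i then a else if t = j then b else 0

theorem hammingDist_pairVec_zero [DecidableEq Q] {i j : Fin m} (hij : i ≠ j) {a b : Q} (ha : a ≠ 0)
    (hb : b ≠ 0) : hammingDist (pairVec i j a b) 0 = 2 := by
  rw [hammingDist_zero_right, hammingNorm, ← Finset.card_pair hij]
  congr 1
  ext t
  rw [Finset.mem_filter_univ]
  simp only [Finset.mem_insert, Finset.mem_singleton, pairVec]
  split_ifs <;> simp_all

theorem exists_mem_apply_eq_of_nbrTrans [DecidableEq Q] {X : Set (Perm (Fin m → Q))}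
    {C : Set (Fin m → Q)}
    (hX : ∀ g ∈ X, IsQAut g) (hXC : ∀ g ∈ X, g '' C = C) (hNT : NbrTrans X C 2)
    (hδ : ∀ u ∈ C, ∀ v ∈ C, u ≠ v → 5 ≤ hammingDist u v) (h0 : 0 ∈ C) {W : Set (Fin m → Q)}
    (hW : ∀ x ∈ X, x 0 = 0 → ∀ w ∈ W, x w ∈ W) {w : Fin m → Q} (hw : w ∈ W) {i j : Fin m}
    (hij : i ≠ j) (hwi : w i ≠ 0) (hwj : w j ≠ 0) {k l : Fin m} (hkl : k ≠ l) {a b : Q}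
    (ha : a ≠ 0) (hb : b ≠ 0) : ∃ w' ∈ W, w' k = a ∧ w' l = b := by
  have hδ' : ∀ u ∈ C, ∀ v ∈ C, u ≠ v → 2 * 2 < hammingDist u v := hδ
  have hν := hammingDist_pairVec_zero hij hwi hwj
  have hν' := hammingDist_pairVec_zero hkl ha hb
  obtain ⟨x, hx, hxν⟩ := hNT 2 le_rfl _ (mem_distSet_of_hammingDist_eq hδ' h0 hν) _
    (mem_distSet_of_hammingDist_eq hδ' h0 hν')
  obtain ⟨h, σ, Hx⟩ := hX x hx
  have hx0 : x 0 = 0 := by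
    refine eq_of_hammingDist_le hδ' ?_ h0 (v := pairVec k l a b) ?_ hν'.le
    · exact hXC x hx ▸ ⟨0, h0, rfl⟩
    · rw [← hxν, Hx.hammingDist_apply, hν]
  have hagree : ∀ s, pairVec i j (w i) (w j) s ≠ 0 → w s = pairVec i j (w i) (w j) s := by
    intro s hs
    unfold pairVec at hs ⊢
    split_ifs at hs ⊢ with hsi hsj <;> simp_all
  have key : ∀ t, pairVec k l a b t ≠ 0 → x w t = pairVec k l a b t := fun t ht => by
    rw [← hxν] at ht ⊢
    exact Hx.apply_eq_apply_of_ne_zero hx0 hagree ht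
  refine ⟨x w, hW x hx hx0 w hw, ?_, ?_⟩
  · simpa [pairVec] using key k (by simpa [pairVec] using ha)
  · simpa [pairVec, hkl.symm] using key l (by simpa [pairVec, hkl.symm] using hb)

end Code

section Orbit

variable {A : Type*} [AddCommGroup A]

def zeroOrbit (N : Subgroup (Perm A)) (hN : N ≤ TransSub A) : AddSubgroup A where
  carrier := {v | ∃ g ∈ N, g 0 = v}
  zero_mem' := ⟨1, N.one_mem, rfl⟩
  add_mem' := by
    rintro _ _ ⟨g, hg, rfl⟩ ⟨g', hg', rfl⟩
    exact ⟨g' * g, N.mul_mem hg' hg, by rw [Perm.mul_apply, apply_eq_add_apply_zero (hN hg')]⟩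
  neg_mem' := by
    rintro _ ⟨g, hg, rfl⟩
    refine ⟨g⁻¹, N.inv_mem hg, ?_⟩
    rw [Perm.inv_eq_iff_eq, apply_eq_add_apply_zero (hN hg), neg_add_cancel]

variable {N : Subgroup (Perm A)} (hN : N ≤ TransSub A)

theorem exists_ne_zero_mem_zeroOrbit {g : Perm A} (hg : g ∈ N) (hg1 : g ≠ 1) :
    ∃ w ∈ zeroOrbit N hN, w ≠ 0 :=
  ⟨g 0, ⟨g, hg, rfl⟩, fun h0 => hg1 (eq_of_mem_transSub (hN hg) (TransSub A).one_mem h0)⟩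

theorem apply_mem_zeroOrbit {x : Perm A} (hx0 : x 0 = 0) (hxN : ∀ g ∈ N, x * g * x⁻¹ ∈ N)
    {w : A} (hw : w ∈ zeroOrbit N hN) : x w ∈ zeroOrbit N hN := by
  obtain ⟨g, hg, rfl⟩ := hw
  refine ⟨x * g * x⁻¹, hxN g hg, ?_⟩
  rw [Perm.mul_apply, Perm.mul_apply, Perm.inv_eq_iff_eq.mpr hx0.symm]

theorem zeroOrbit_subset {C : Set A} (hNC : ∀ g ∈ N, g '' C = C) (h0 : 0 ∈ C) :
    (zeroOrbit N hN : Set A) ⊆ C := by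
  rintro _ ⟨g, hg, rfl⟩
  exact hNC g hg ▸ ⟨0, h0, rfl⟩

end Orbit

section Counting

variable {ι Q : Type*} [AddCommGroup Q] {W : AddSubgroup (ι → Q)} {k l : ι}

theorem card_sq_dvd_card_of_forall_exists
    (hW : ∀ x y : Q, ∃ w ∈ W, w k = x ∧ w l = y) : Nat.card Q ^ 2 ∣ Nat.card W := by
  let f : W →+ Q × Q := ((Pi.evalAddMonoidHom _ k).prod (Pi.evalAddMonoidHom _ l)).comp W.subtype
  have hf : Function.Surjective f := fun ⟨x, y⟩ =>
    have ⟨w, hw, hwk, hwl⟩ := hW x y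
    ⟨⟨w, hw⟩, Prod.ext hwk hwl⟩
  simpa [sq] using AddSubgroup.card_dvd_of_surjective f hf

theorem forall_exists_of_two_lt_card (hQ : 2 < Nat.card Q)
    (hW : ∀ a b : Q, a ≠ 0 → b ≠ 0 → ∃ w ∈ W, w k = a ∧ w l = b) (x y : Q) :
    ∃ w ∈ W, w k = x ∧ w l = y := by
  have : Finite Q := Nat.finite_of_card_ne_zero (by omega)
  have h3 : 3 ≤ ENat.card Q := by
    rw [ENat.card_eq_coe_natCard]
    exact_mod_cast hQ
  obtain ⟨c, hc0, hcx⟩ := ENat.exists_ne_ne_of_three_le h3 0 x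
  obtain ⟨e, he0, hey⟩ := ENat.exists_ne_ne_of_three_le h3 0 y
  obtain ⟨u, hu, huk, hul⟩ := hW c e hc0 he0
  obtain ⟨v, hv, hvk, hvl⟩ := hW (x - c) (y - e) (sub_ne_zero.mpr hcx.symm)
    (sub_ne_zero.mpr hey.symm)
  exact ⟨u + v, W.add_mem hu hv, by simp [huk, hvk], by simp [hul, hvl]⟩

theorem forall_exists_of_card_eq_two (hQ : Nat.card Q = 2)
    (hW : ∀ a b : Q, a ≠ 0 → b ≠ 0 → ∃ w ∈ W, w k = a ∧ w l = b) {v : ι → Q} (hv : v ∈ W)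
    (hvk : v k ≠ 0) (hvl : v l = 0) (x y : Q) : ∃ w ∈ W, w k = x ∧ w l = y := by
  have hQ' : ∀ a b : Q, a ≠ 0 → b ≠ 0 → a = b := fun a b ha hb =>
    ((Nat.card_eq_two_iff' 0).mp hQ).unique ha hb
  obtain rfl | hy := eq_or_ne y 0
  · obtain rfl | hx := eq_or_ne x 0
    · exact ⟨0, W.zero_mem, rfl, rfl⟩
    · exact ⟨v, hv, hQ' _ _ hvk hx, hvl⟩
  · obtain ⟨u, hu, huk, hul⟩ := hW (v k) y hvk hy
    obtain rfl | hx := eq_or_ne x 0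
    · exact ⟨u - v, W.sub_mem hu hv, by simp [huk], by simp [hul, hvl]⟩
    · exact ⟨u, hu, huk.trans (hQ' _ _ hvk hx), hul⟩

theorem exists_apply_ne_zero_apply_eq_zero (hQ : Nat.card Q = 2) {e : Q} (he : e ≠ 0)
    (hW : (W : Set (ι → Q)) ≠ {0, fun _ => e}) {w₀ : ι → Q} (hw₀ : w₀ ∈ W) (hw₀0 : w₀ ≠ 0) :
    ∃ v ∈ W, ∃ k l, v k ≠ 0 ∧ v l = 0 := by
  have hQ' : ∀ a : Q, a ≠ 0 → a = e := fun a ha =>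
    ((Nat.card_eq_two_iff' 0).mp hQ).unique ha he
  have hconst : ∀ v : ι → Q, v ≠ 0 → (∀ l, v l ≠ 0) → v = fun _ => e := fun v _ hv =>
    funext fun l => hQ' _ (hv l)
  by_contra! hall
  refine hW (Set.eq_of_subset_of_subset (fun v hv => ?_) ?_)
  · by_cases hv0 : v = 0
    · exact Or.inl hv0
    obtain ⟨k, hk⟩ := Function.ne_iff.mp hv0
    exact Or.inr (hconst v hv0 fun l => hall v hv k l hk)
  · rintro _ (rfl | rfl)
    · exact W.zero_mem
    obtain ⟨k, hk⟩ := Function.ne_iff.mp hw₀0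
    exact hconst w₀ hw₀0 (fun l => hall w₀ hw₀ k l hk) ▸ hw₀

theorem card_sq_dvd_card_of_forall_exists_ne_zero [Finite Q] {e : Q} (he : e ≠ 0)
    (hW : Nat.card Q ≠ 2 ∨ (W : Set (ι → Q)) ≠ {0, fun _ => e})
    (hpairs : ∀ k l, k ≠ l → ∀ a b : Q, a ≠ 0 → b ≠ 0 → ∃ w ∈ W, w k = a ∧ w l = b)
    {i j : ι} (hij : i ≠ j) {w₀ : ι → Q} (hw₀ : w₀ ∈ W) (hw₀0 : w₀ ≠ 0) :
    Nat.card Q ^ 2 ∣ Nat.card W := by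
  by_cases h2 : Nat.card Q = 2
  · obtain ⟨v, hv, k, l, hk, hl⟩ := exists_apply_ne_zero_apply_eq_zero h2 he
      (hW.resolve_left (not_not.mpr h2)) hw₀ hw₀0
    have hkl : k ≠ l := by rintro rfl; exact hk hl
    exact card_sq_dvd_card_of_forall_exists
      (forall_exists_of_card_eq_two h2 (hpairs k l hkl) hv hk hl)
  · have : Nontrivial Q := ⟨e, 0, he⟩
    exact card_sq_dvd_card_of_forall_exists (forall_exists_of_two_lt_card
      (lt_of_le_of_ne Finite.one_lt_card (Ne.symm h2)) (hpairs i j hij))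

end Counting

theorem stmt6 (p d m : ℕ) (hp : p.Prime) (hd : 1 ≤ d)
    (C : Set (VA p d m)) (X : Subgroup (Perm (VA p d m)))
    (hAff : AlphabetAffine (X : Set (Perm (VA p d m))) C)
    (hNT : NbrTrans (X : Set (Perm (VA p d m))) C 2)
    (hδ : ∀ u ∈ C, ∀ v ∈ C, u ≠ v → 5 ≤ hammingDist u v)
    (h0 : (0 : VA p d m) ∈ C)
    (N : Subgroup (Perm (VA p d m)))
    (hN1 : (N : Set (Perm (VA p d m))) ⊆ KSet (X : Set (Perm (VA p d m))))
    (hN2 : IsPGroup p N)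
    (hN3 : ∀ g ∈ KSet (X : Set (Perm (VA p d m))), ∀ t ∈ N, g * t * g⁻¹ ∈ N)
    (hN4 : ∀ P : Subgroup (Perm (VA p d m)),
      (P : Set (Perm (VA p d m))) ⊆ KSet (X : Set (Perm (VA p d m))) →
      IsPGroup p P →
      (∀ g ∈ KSet (X : Set (Perm (VA p d m))), ∀ t ∈ P, g * t * g⁻¹ ∈ P) → P ≤ N)
    (W : Set (VA p d m))
    (hW : W = {v | ∃ g ∈ N, g (0 : VA p d m) = v})
    -- `W` is not the binary repetition code
    (hnr : p ^ d ≠ 2 ∨ W ≠ ({0, fun _ _ => (1 : ZMod p)} : Set (VA p d m))) :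
    (p ^ d) ^ 2 ∣ Nat.card W := by
  have : Fact p.Prime := ⟨hp⟩
  have hN : IsPCore p (KSet (X : Set (Perm (VA p d m)))) N := ⟨hN1, hN2, hN3, hN4⟩
  have hNT' := le_transSub_of_isPCore hd hAff hN
  obtain ⟨g, hg, hg1⟩ := exists_ne_one_mem_of_isPCore hAff hN
  obtain ⟨w₀, hw₀, hw₀0⟩ := exists_ne_zero_mem_zeroOrbit hNT' hg hg1
  obtain ⟨i, j, hij, hi, hj⟩ := exists_ne_of_one_lt_hammingNorm (w := w₀) <| by
    have := hδ w₀ (zeroOrbit_subset hNT' (fun g hg => hAff.2.1 g (hN1 hg).1) h0 hw₀) 0 h0 hw₀0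
    rw [hammingDist_zero_right] at this
    omega
  have hpairs : ∀ k l, k ≠ l → ∀ a b : QA p d, a ≠ 0 → b ≠ 0 →
      ∃ w ∈ zeroOrbit N hNT', w k = a ∧ w l = b := fun k l hkl a b ha hb =>
    exists_mem_apply_eq_of_nbrTrans hAff.1 hAff.2.1 hNT hδ h0
      (fun x hx hx0 _ hw =>
        apply_mem_zeroOrbit hNT' hx0 (fun _ hn => hN.conj_mem_of_mem hAff.1 hx hn) hw)
      hw₀ hij hi hj hkl ha hb
  have hQ : Nat.card (QA p d) = p ^ d := by simp
  subst hW
  rw [← hQ]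
  exact card_sq_dvd_card_of_forall_exists_ne_zero (Function.ne_iff.mpr ⟨⟨0, hd⟩, one_ne_zero⟩)
    (by rwa [hQ]) hpairs hij hw₀ hw₀0

end Paper
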